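/- arXiv:2511.22654 — 2 statements merged into one kernel-verified Lean document; each statement's English description precedes it below -/
import Mathlib

section
/- Suppose l is an index with 0 < λ_l < 1. Then the subspace S_l := span{ |0⟩⊗φ_l , Ũ*(|0⟩⊗ψ_l) } of ℂ² ⊗ ℂⁿ is two-dimensional, is invariant under the echo operator C, and the restriction of C to S_l is unitary with eigenvalues e^{iθ_l} and e^{−iθ_l}, where λ_l = cos(θ_l/2). (Qubitization: C acts on each nondegenerate singular-value sector as a rotation by angle θ_l.) -/
/-!
Put `v₁ = |0⟩ ⊗ φ_l`, `u = |0⟩ ⊗ ψ_l`, `v₂ = Ũ* u` and `c = λ_l`. Since `Z ⊗ I = 2 (|0⟩⟨0| ⊗ I) - 1`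
and the top-left block of `Ũ` is `A`, the reflection `Z ⊗ I` fixes `v₁` and `u` and maps
`v₂ ↦ 2c v₁ - v₂` and `Ũ v₁ ↦ 2c u - Ũ v₁`. Hence `C v₁ = 2c v₂ - v₁` and
`C v₂ = (4c² - 1) v₂ - 2c v₁`, so `span {v₁, v₂}` is `C`-invariant, and for each root
`z = e^{± iθ_l/2}` of `z² - 2cz + 1` the vector `v₁ - z v₂` is an eigenvector with eigenvalue
`z² = e^{± iθ_l}`. The spanning vectors are independent because their Gram determinant is
`1 - c² ≠ 0`, and `C` is unitary as a product of unitaries.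
-/

open Matrix Complex

namespace Matrix

variable {R n : Type*} [CommRing R] [StarRing R] [Fintype n] [DecidableEq n]
  {U : Matrix n n R}

theorem conjTranspose_mem_unitaryGroup (hU : U ∈ unitaryGroup n R) : Uᴴ ∈ unitaryGroup n R := by
  rw [← star_eq_conjTranspose]
  exact Unitary.star_mem hU

theorem conjTranspose_mulVec_mulVec_cancel (hU : U ∈ unitaryGroup n R) (x : n → R) :
    Uᴴ *ᵥ (U *ᵥ x) = x := by
  rw [mulVec_mulVec, ← star_eq_conjTranspose, hU.1, one_mulVec]

theorem mulVec_conjTranspose_mulVec_cancel (hU : U ∈ unitaryGroup n R) (x : n → R) :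
    U *ᵥ (Uᴴ *ᵥ x) = x := by
  rw [mulVec_mulVec, ← star_eq_conjTranspose, hU.2, one_mulVec]

theorem star_mulVec_dotProduct_mulVec (hU : U ∈ unitaryGroup n R) (x y : n → R) :
    star (U *ᵥ x) ⬝ᵥ (U *ᵥ y) = star x ⬝ᵥ y := by
  rw [star_mulVec, dotProduct_mulVec, vecMul_vecMul, ← star_eq_conjTranspose, hU.1, vecMul_one]

end Matrix

theorem linearIndependent_pair_of_dotProduct {K n : Type*} [Field K] [StarRing K] [Fintype n]
    {v w : n → K} {c : K} (hv : star v ⬝ᵥ v = 1) (hw : star w ⬝ᵥ w = 1)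
    (hvw : star v ⬝ᵥ w = c) (hc : star c * c ≠ 1) : LinearIndependent K ![v, w] := by
  have hwv : star w ⬝ᵥ v = star c := by rw [star_dotProduct, hvw]
  refine LinearIndependent.pair_iff.2 fun a b hab => ?_
  have h₁ : a + b * c = 0 := by
    simpa [dotProduct_add, dotProduct_smul, hv, hvw] using congrArg (star v ⬝ᵥ ·) hab
  have h₂ : a * star c + b = 0 := by
    simpa [dotProduct_add, dotProduct_smul, hwv, hw] using congrArg (star w ⬝ᵥ ·) hab
  have ha : a = 0 := by
    have : a * (1 - star c * c) = 0 := by linear_combination h₁ - c * h₂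
    exact (mul_eq_zero.1 this).resolve_right (sub_ne_zero.2 hc.symm)
  exact ⟨ha, by linear_combination h₂ - star c * ha⟩

theorem finrank_span_pair {K M : Type*} [DivisionRing K] [AddCommGroup M] [Module K M] {v w : M}
    (h : LinearIndependent K ![v, w]) : Module.finrank K (Submodule.span K {v, w}) = 2 := by
  have h := finrank_span_eq_card h
  rwa [range_cons, range_cons, range_empty, Set.union_empty, Set.singleton_union,
    Fintype.card_fin] at h

section PairRecurrence

variable {R M : Type*} [CommRing R] [AddCommGroup M] [Module R M] {f : M →ₗ[R] M} {v w : M}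
  {c : R}

theorem apply_mem_span_pair (hv : f v = (2 * c) • w - v)
    (hw : f w = (4 * c ^ 2 - 1) • w - (2 * c) • v) {x : M} (hx : x ∈ Submodule.span R {v, w}) :
    f x ∈ Submodule.span R {v, w} := by
  have hvS : v ∈ Submodule.span R {v, w} := Submodule.subset_span (by simp)
  have hwS : w ∈ Submodule.span R {v, w} := Submodule.subset_span (by simp)
  refine Submodule.span_le (p := (Submodule.span R {v, w}).comap f) |>.2
    (Set.pair_subset ?_ ?_) hx
  · rw [SetLike.mem_coe, Submodule.mem_comap, hv]
    exact sub_mem (Submodule.smul_mem _ _ hwS) hvS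
  · rw [SetLike.mem_coe, Submodule.mem_comap, hw]
    exact sub_mem (Submodule.smul_mem _ _ hwS) (Submodule.smul_mem _ _ hvS)

theorem apply_sub_smul_eq_sq_smul (hv : f v = (2 * c) • w - v)
    (hw : f w = (4 * c ^ 2 - 1) • w - (2 * c) • v) {z : R} (hz : z ^ 2 + 1 = 2 * c * z) :
    f (v - z • w) = z ^ 2 • (v - z • w) := by
  rw [map_sub, map_smul, hv, hw]
  match_scalars
  · linear_combination (z + 2 * c) * hz
  · linear_combination -hz

theorem exists_mem_span_pair_apply_eq_sq_smul [Nontrivial R] (hind : LinearIndependent R ![v, w])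
    (hv : f v = (2 * c) • w - v) (hw : f w = (4 * c ^ 2 - 1) • w - (2 * c) • v) {z : R}
    (hz : z ^ 2 + 1 = 2 * c * z) :
    ∃ x ∈ Submodule.span R {v, w}, x ≠ 0 ∧ f x = z ^ 2 • x := by
  refine ⟨v - z • w, sub_mem (Submodule.subset_span (by simp))
    (Submodule.smul_mem _ _ (Submodule.subset_span (by simp))), fun h => ?_,
    apply_sub_smul_eq_sq_smul hv hw hz⟩
  refine one_ne_zero (LinearIndependent.pair_iff.1 hind 1 (-z) ?_).1
  rwa [one_smul, neg_smul, ← sub_eq_add_neg]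

end PairRecurrence

theorem Complex.exp_half_mul_I_sq (t : ℂ) : exp (t / 2 * I) ^ 2 = exp (t * I) := by
  rw [← exp_nat_mul]
  ring_nf

theorem Complex.exp_half_mul_I_sq_add_one (t : ℂ) :
    exp (t / 2 * I) ^ 2 + 1 = 2 * cos (t / 2) * exp (t / 2 * I) := by
  rw [two_cos, add_mul, ← exp_add, ← exp_add, sq, ← exp_add, neg_mul, neg_add_cancel, exp_zero]

section Blocks

variable {R ι : Type*} [CommRing R]

/-- The vector `|0⟩ ⊗ x`. -/
def ketZero (x : ι → R) : Fin 2 × ι → R := fun p => if p.1 = 0 then x p.2 else 0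

def topBlock (w : Fin 2 × ι → R) : ι → R := fun a => w (0, a)

def topLeft (U : Matrix (Fin 2 × ι) (Fin 2 × ι) R) : Matrix ι ι R :=
  U.submatrix (Prod.mk 0) (Prod.mk 0)

@[simp]
theorem topBlock_ketZero (x : ι → R) : topBlock (ketZero x) = x := by
  funext a
  simp [topBlock, ketZero]

theorem topLeft_conjTranspose [StarRing R] (U : Matrix (Fin 2 × ι) (Fin 2 × ι) R) :
    topLeft Uᴴ = (topLeft U)ᴴ :=
  rfl

variable [Fintype ι]

theorem topBlock_mulVec_ketZero (U : Matrix (Fin 2 × ι) (Fin 2 × ι) R) (x : ι → R) :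
    topBlock (U *ᵥ ketZero x) = topLeft U *ᵥ x := by
  funext a
  simp [topBlock, ketZero, topLeft, mulVec, dotProduct, Fintype.sum_prod_type]

theorem star_ketZero_dotProduct [StarRing R] (x : ι → R) (w : Fin 2 × ι → R) :
    star (ketZero x) ⬝ᵥ w = star x ⬝ᵥ topBlock w := by
  simp [ketZero, topBlock, dotProduct, Fintype.sum_prod_type]

variable [DecidableEq ι]

/-- The operator `Z ⊗ I`. -/
def pauliZI : Matrix (Fin 2 × ι) (Fin 2 × ι) R :=
  diagonal fun p => if p.1 = 0 then 1 else -1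

theorem pauliZI_mulVec_ketZero (x : ι → R) : pauliZI *ᵥ ketZero x = ketZero x := by
  funext ⟨i, a⟩
  fin_cases i <;> simp [pauliZI, ketZero, mulVec_diagonal]

theorem pauliZI_mulVec_of_topBlock {w : Fin 2 × ι → R} {x : ι → R} {c : R}
    (hw : topBlock w = c • x) : pauliZI *ᵥ w = (2 * c) • ketZero x - w := by
  funext ⟨i, a⟩
  have hwa : w (0, a) = c * x a := congrFun hw a
  fin_cases i <;> simp [pauliZI, ketZero, mulVec_diagonal, hwa]
  ring

variable [StarRing R]

theorem pauliZI_mem_unitaryGroup :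
    (pauliZI : Matrix (Fin 2 × ι) (Fin 2 × ι) R) ∈ unitaryGroup (Fin 2 × ι) R := by
  rw [mem_unitaryGroup_iff', star_eq_conjTranspose, pauliZI, diagonal_conjTranspose,
    diagonal_mul_diagonal, ← diagonal_one]
  congr 1
  funext p
  split_ifs <;> simp [*]

def echo (U : Matrix (Fin 2 × ι) (Fin 2 × ι) R) : Matrix (Fin 2 × ι) (Fin 2 × ι) R :=
  Uᴴ * pauliZI * U * pauliZI

theorem echo_mem_unitaryGroup {U : Matrix (Fin 2 × ι) (Fin 2 × ι) R}
    (hU : U ∈ unitaryGroup (Fin 2 × ι) R) : echo U ∈ unitaryGroup (Fin 2 × ι) R :=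
  mul_mem (mul_mem (mul_mem (conjTranspose_mem_unitaryGroup hU) pauliZI_mem_unitaryGroup) hU)
    pauliZI_mem_unitaryGroup

section Echo

variable {U : Matrix (Fin 2 × ι) (Fin 2 × ι) R} {φ ψ : ι → R} {c : R}

theorem echo_mulVec (U : Matrix (Fin 2 × ι) (Fin 2 × ι) R) (x : Fin 2 × ι → R) :
    echo U *ᵥ x = Uᴴ *ᵥ (pauliZI *ᵥ (U *ᵥ (pauliZI *ᵥ x))) := by
  simp only [echo, mulVec_mulVec, Matrix.mul_assoc]

theorem echo_mulVec_ketZero (hU : U ∈ unitaryGroup (Fin 2 × ι) R)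
    (hφ : topBlock (U *ᵥ ketZero φ) = c • ψ) :
    echo U *ᵥ ketZero φ = (2 * c) • (Uᴴ *ᵥ ketZero ψ) - ketZero φ := by
  rw [echo_mulVec, pauliZI_mulVec_ketZero, pauliZI_mulVec_of_topBlock hφ, mulVec_sub,
    mulVec_smul, conjTranspose_mulVec_mulVec_cancel hU]

theorem echo_mulVec_conjTranspose_mulVec_ketZero (hU : U ∈ unitaryGroup (Fin 2 × ι) R)
    (hφ : topBlock (U *ᵥ ketZero φ) = c • ψ) (hψ : topBlock (Uᴴ *ᵥ ketZero ψ) = c • φ) :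
    echo U *ᵥ (Uᴴ *ᵥ ketZero ψ) =
      (4 * c ^ 2 - 1) • (Uᴴ *ᵥ ketZero ψ) - (2 * c) • ketZero φ := by
  simp only [echo_mulVec, pauliZI_mulVec_of_topBlock hψ, pauliZI_mulVec_of_topBlock hφ,
    pauliZI_mulVec_ketZero, mulVec_sub, mulVec_smul, conjTranspose_mulVec_mulVec_cancel hU,
    mulVec_conjTranspose_mulVec_cancel hU]
  module

end Echo

end Blocks

theorem linearIndependent_ketZero_conjTranspose_mulVec_ketZero {K ι : Type*} [Field K]
    [StarRing K] [Fintype ι] [DecidableEq ι] {U : Matrix (Fin 2 × ι) (Fin 2 × ι) K}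
    (hU : U ∈ unitaryGroup (Fin 2 × ι) K) {φ ψ : ι → K} {c : K} (hφ : star φ ⬝ᵥ φ = 1)
    (hψ : star ψ ⬝ᵥ ψ = 1) (hUψ : topBlock (Uᴴ *ᵥ ketZero ψ) = c • φ) (hc : star c * c ≠ 1) :
    LinearIndependent K ![ketZero φ, Uᴴ *ᵥ ketZero ψ] := by
  refine linearIndependent_pair_of_dotProduct (c := c) ?_ ?_ ?_ hc
  · rw [star_ketZero_dotProduct, topBlock_ketZero, hφ]
  · rw [star_mulVec_dotProduct_mulVec (conjTranspose_mem_unitaryGroup hU),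
      star_ketZero_dotProduct, topBlock_ketZero, hψ]
  · rw [star_ketZero_dotProduct, hUψ, dotProduct_smul, hφ, smul_eq_mul, mul_one]

theorem echo_qubitization_general
    (n : ℕ)
    (Ut : Matrix (Fin 2 × Fin n) (Fin 2 × Fin n) ℂ)
    (hUt : Ut ∈ Matrix.unitaryGroup (Fin 2 × Fin n) ℂ)
    (A : Matrix (Fin n) (Fin n) ℂ)
    (hA : ∀ a b : Fin n, A a b = Ut (0, a) (0, b))
    (ZI : Matrix (Fin 2 × Fin n) (Fin 2 × Fin n) ℂ)
    (hZI : ∀ p q : Fin 2 × Fin n,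
      ZI p q = if p = q then (if p.1 = 0 then 1 else -1) else 0)
    (C : Matrix (Fin 2 × Fin n) (Fin 2 × Fin n) ℂ)
    (hC : C = Utᴴ * ZI * Ut * ZI)
    -- singular value decomposition of `A`
    (ψb φb : Fin n → (Fin n → ℂ))
    (hψb : ∀ l l' : Fin n, star (ψb l) ⬝ᵥ ψb l' = if l = l' then 1 else 0)
    (hφb : ∀ l l' : Fin n, star (φb l) ⬝ᵥ φb l' = if l = l' then 1 else 0)
    (lam θ : Fin n → ℝ)
    (hAφ : ∀ l : Fin n, A *ᵥ φb l = (lam l : ℂ) • ψb l)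
    (hAψ : ∀ l : Fin n, Aᴴ *ᵥ ψb l = (lam l : ℂ) • φb l)
    (hlamθ : ∀ l : Fin n, lam l = Real.cos (θ l / 2))
    -- a nondegenerate singular-value index
    (l : Fin n) (hl0 : 0 < lam l) (hl1 : lam l < 1)
    -- the two spanning vectors and the subspace `S_l`
    (v₁ v₂ : Fin 2 × Fin n → ℂ)
    (hv₁ : ∀ p : Fin 2 × Fin n, v₁ p = if p.1 = 0 then φb l p.2 else 0)
    (hv₂ : v₂ = Utᴴ *ᵥ (fun p : Fin 2 × Fin n => if p.1 = 0 then ψb l p.2 else 0))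
    (S : Submodule ℂ (Fin 2 × Fin n → ℂ))
    (hS : S = Submodule.span ℂ {v₁, v₂}) :
    Module.finrank ℂ S = 2 ∧
    (∀ x ∈ S, C *ᵥ x ∈ S) ∧
    (∀ x ∈ S, ∀ y ∈ S, star (C *ᵥ x) ⬝ᵥ (C *ᵥ y) = star x ⬝ᵥ y) ∧
    (∃ w ∈ S, w ≠ 0 ∧ C *ᵥ w = Complex.exp ((θ l : ℂ) * Complex.I) • w) ∧
    (∃ w ∈ S, w ≠ 0 ∧ C *ᵥ w = Complex.exp (-(θ l : ℂ) * Complex.I) • w) := by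
  obtain rfl : ZI = pauliZI := by ext p q; rw [hZI, pauliZI, diagonal_apply]
  obtain rfl : A = topLeft Ut := by ext a b; exact hA a b
  obtain rfl : v₁ = ketZero (φb l) := funext hv₁
  obtain rfl : v₂ = Utᴴ *ᵥ ketZero (ψb l) := hv₂
  obtain rfl : C = echo Ut := hC
  subst hS
  have hφ : topBlock (Ut *ᵥ ketZero (φb l)) = (lam l : ℂ) • ψb l := by
    rw [topBlock_mulVec_ketZero, hAφ]
  have hψ : topBlock (Utᴴ *ᵥ ketZero (ψb l)) = (lam l : ℂ) • φb l := by
    rw [topBlock_mulVec_ketZero, topLeft_conjTranspose, hAψ]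
  have hCv₁ := echo_mulVec_ketZero hUt hφ
  have hCv₂ := echo_mulVec_conjTranspose_mulVec_ketZero hUt hφ hψ
  have hindep := linearIndependent_ketZero_conjTranspose_mulVec_ketZero hUt
    (by rw [hφb, if_pos rfl]) (by rw [hψb, if_pos rfl]) hψ (by
      rw [Complex.star_def, Complex.conj_ofReal, ← Complex.ofReal_mul, Ne, Complex.ofReal_eq_one]
      nlinarith)
  have hcos : cos ((θ l : ℂ) / 2) = lam l := by
    rw [hlamθ, ofReal_cos, ofReal_div, ofReal_ofNat]
  refine ⟨finrank_span_pair hindep, fun _ => apply_mem_span_pair (f := (echo Ut).mulVecLin)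
    hCv₁ hCv₂, fun x _ y _ => star_mulVec_dotProduct_mulVec (echo_mem_unitaryGroup hUt) x y,
    ?_, ?_⟩
  · rw [← exp_half_mul_I_sq]
    exact exists_mem_span_pair_apply_eq_sq_smul (f := (echo Ut).mulVecLin) hindep hCv₁ hCv₂
      (hcos ▸ exp_half_mul_I_sq_add_one _)
  · rw [← exp_half_mul_I_sq]
    exact exists_mem_span_pair_apply_eq_sq_smul (f := (echo Ut).mulVecLin) hindep hCv₁ hCv₂
      (by rw [exp_half_mul_I_sq_add_one, neg_div, cos_neg, hcos])

/-- **Qubitization of the echo operator.** If `0 < λ_l < 1`, the subspace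
`S_l = span{|0⟩⊗φ_l, Ũ*(|0⟩⊗ψ_l)}` is two-dimensional, invariant under the echo
operator `C`, and the restriction of `C` to `S_l` is unitary with eigenvalues
`e^{iθ_l}` and `e^{−iθ_l}`, where `λ_l = cos(θ_l/2)`. -/
theorem echo_qubitization
    (n : ℕ) (hn : 1 ≤ n)
    (Ut : Matrix (Fin 2 × Fin n) (Fin 2 × Fin n) ℂ)
    (hUt : Ut ∈ Matrix.unitaryGroup (Fin 2 × Fin n) ℂ)
    (A : Matrix (Fin n) (Fin n) ℂ)
    (hA : ∀ a b : Fin n, A a b = Ut (0, a) (0, b))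
    (ZI : Matrix (Fin 2 × Fin n) (Fin 2 × Fin n) ℂ)
    (hZI : ∀ p q : Fin 2 × Fin n,
      ZI p q = if p = q then (if p.1 = 0 then 1 else -1) else 0)
    (C : Matrix (Fin 2 × Fin n) (Fin 2 × Fin n) ℂ)
    (hC : C = Utᴴ * ZI * Ut * ZI)
    -- singular value decomposition of `A`
    (ψb φb : Fin n → (Fin n → ℂ))
    (hψb : ∀ l l' : Fin n, star (ψb l) ⬝ᵥ ψb l' = if l = l' then 1 else 0)
    (hφb : ∀ l l' : Fin n, star (φb l) ⬝ᵥ φb l' = if l = l' then 1 else 0)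
    (lam θ : Fin n → ℝ)
    (hAφ : ∀ l : Fin n, A *ᵥ φb l = (lam l : ℂ) • ψb l)
    (hAψ : ∀ l : Fin n, Aᴴ *ᵥ ψb l = (lam l : ℂ) • φb l)
    (hlam : ∀ l : Fin n, lam l ∈ Set.Icc (0 : ℝ) 1)
    (hθ : ∀ l : Fin n, θ l ∈ Set.Icc (0 : ℝ) Real.pi)
    (hlamθ : ∀ l : Fin n, lam l = Real.cos (θ l / 2))
    -- a nondegenerate singular-value index
    (l : Fin n) (hl0 : 0 < lam l) (hl1 : lam l < 1)
    -- the two spanning vectors and the subspace `S_l`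
    (v₁ v₂ : Fin 2 × Fin n → ℂ)
    (hv₁ : ∀ p : Fin 2 × Fin n, v₁ p = if p.1 = 0 then φb l p.2 else 0)
    (hv₂ : v₂ = Utᴴ *ᵥ (fun p : Fin 2 × Fin n => if p.1 = 0 then ψb l p.2 else 0))
    (S : Submodule ℂ (Fin 2 × Fin n → ℂ))
    (hS : S = Submodule.span ℂ {v₁, v₂}) :
    Module.finrank ℂ S = 2 ∧
    (∀ x ∈ S, C *ᵥ x ∈ S) ∧
    (∀ x ∈ S, ∀ y ∈ S, star (C *ᵥ x) ⬝ᵥ (C *ᵥ y) = star x ⬝ᵥ y) ∧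
    (∃ w ∈ S, w ≠ 0 ∧ C *ᵥ w = Complex.exp ((θ l : ℂ) * Complex.I) • w) ∧
    (∃ w ∈ S, w ≠ 0 ∧ C *ᵥ w = Complex.exp (-(θ l : ℂ) * Complex.I) • w) :=
  echo_qubitization_general n Ut hUt A hA ZI hZI C hC ψb φb hψb hφb lam θ hAφ hAψ hlamθ l hl0 hl1 v₁
    v₂ hv₁ hv₂ S hS
end

section
/- Fix an integer d ≥ 1 and real phases β_0, α_1, β_1, …, α_d, β_d, and let P ∈ ℂ[x] with deg P ≤ 2d be a polynomial such that the single-qubit QSP product M(θ) := e^{−iβ_0 Z} · Π_{r=1}^{d} [ e^{i(θ/2)Y} e^{−iα_r Z} e^{−i(θ/2)Y} e^{−iβ_r Z} ] satisfies ⟨0|M(θ)|0⟩ = P(cos(θ/2)) for all θ. Define the generalized echo operators C_r := Ũ* (e^{−iα_r Z} ⊗ I) Ũ (e^{−iβ_r Z} ⊗ I) on ℂ² ⊗ ℂⁿ. Then for every unit vector ψ ∈ ℂⁿ, the QSP-OTOC value ⟨(|0⟩⊗ψ), (e^{−iβ_0 Z} ⊗ I) C_d ⋯ C_1 (|0⟩⊗ψ)⟩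 equals Σ_{l=1}^{n} |α_l|² P(λ_l); i.e., the depth-d QSP-OTOC applies the polynomial P to each singular value of the truncated propagator A. -/
open Matrix Polynomial Finset

/-- The Pauli matrix `Y`. -/
noncomputable def pauliY : Matrix (Fin 2) (Fin 2) ℂ :=
  !![0, -Complex.I; Complex.I, 0]

/-- `e^{−i(θ/2)Y} = cos(θ/2)·I − i sin(θ/2)·Y`. -/
noncomputable def Ry (θ : ℝ) : Matrix (Fin 2) (Fin 2) ℂ :=
  (Real.cos (θ / 2) : ℂ) • (1 : Matrix (Fin 2) (Fin 2) ℂ)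
    - (Complex.I * (Real.sin (θ / 2) : ℂ)) • pauliY

/-- `e^{−iαZ} = diag(e^{−iα}, e^{iα})`. -/
noncomputable def Rz (α : ℝ) : Matrix (Fin 2) (Fin 2) ℂ :=
  !![Complex.exp (-(α : ℂ) * Complex.I), 0; 0, Complex.exp ((α : ℂ) * Complex.I)]

/-- The ordered product `term d * term (d-1) * ⋯ * term 1`
(the factor with `r = 1` rightmost, `r` increasing from right to left). -/
noncomputable def orderedProd {M : Type*} [Monoid M] (term : ℕ → M) : ℕ → M
  | 0 => 1
  | d + 1 => term (d + 1) * orderedProd term d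

/-!
For a singular triple `A φ = λ ψ`, `A* ψ = λ φ`, the vectors `|0⟩φ, Ũ*|0⟩ψ - λ|0⟩φ` and
`|0⟩ψ, Ũ|0⟩φ - λ|0⟩ψ` span two planes that `Ũ` and `Ũ*` exchange, both acting by the
2 × 2 matrix `W(λ) = [[λ, 1 - λ²], [1, -λ]]` (Jordan's lemma, as in qubitization). In each plane the
first vector lies in the `|0⟩` sector and the second in the `|1⟩` sector, so `e^{-iγZ} ⊗ I` acts
there as `e^{-iγZ}`. Hence the QSP-OTOC operator maps the plane of `φ_l` to itself through the QSP
product built from `W(λ_l)`, and `φ_l` is an eigenvector of its `⟨0|·|0⟩` block with eigenvalue the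
`(0,0)` entry of that product. Writing `λ = cos(θ/2)`, the diagonal matrices `diag(1, ± sin(θ/2))`
intertwine `W(λ)` with `e^{± i(θ/2)Y}`, so this entry is `P(λ_l)`. Expanding `ψ` in the
orthonormal basis `φ_l` gives the sum.
-/

theorem orderedProd_mul_of_mul_eq {R m k : Type*} [Semiring R] [Fintype m] [DecidableEq m]
    [Fintype k] [DecidableEq k] {X : ℕ → Matrix m m R} {Y : ℕ → Matrix k k R}
    {V : Matrix m k R} (h : ∀ r, X r * V = V * Y r) (d : ℕ) :
    orderedProd X d * V = V * orderedProd Y d := by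
  induction d with
  | zero => simp [orderedProd]
  | succ d ih =>
    simp only [orderedProd]
    rw [Matrix.mul_assoc, ih, ← Matrix.mul_assoc, h, Matrix.mul_assoc]

section ColumnPair

variable {R n : Type*} [CommRing R]

def columnPair (u w : n → R) : Matrix n (Fin 2) R := (of ![u, w])ᵀ

theorem mul_columnPair [Fintype n] (X : Matrix n n R) (u w : n → R) :
    X * columnPair u w = columnPair (X *ᵥ u) (X *ᵥ w) := by
  ext p j
  fin_cases j <;> simp [columnPair, Matrix.mul_apply, Matrix.mulVec, dotProduct]

theorem columnPair_mul (u w : n → R) (N : Matrix (Fin 2) (Fin 2) R) :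
    columnPair u w * N = columnPair (N 0 0 • u + N 1 0 • w) (N 0 1 • u + N 1 1 • w) := by
  ext p j
  fin_cases j <;> simp [columnPair, Matrix.mul_apply, Fin.sum_univ_two, mul_comm]

/-- The invariant planes are spanned by unnormalised vectors (the second has norm `√(1 - c²)`,
possibly zero), hence the entry `1 - c²` and no unitarity. -/
def qubitWalk (c : R) : Matrix (Fin 2) (Fin 2) R := !![c, 1 - c ^ 2; 1, -c]

theorem mul_columnPair_sub_eq_columnPair_mul_qubitWalk [Fintype n] [DecidableEq n]
    {U V : Matrix n n R} (hUV : U * V = 1) (c : R) (u w : n → R) :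
    U * columnPair u (V *ᵥ w - c • u) = columnPair w (U *ᵥ u - c • w) * qubitWalk c := by
  have hUVw : U *ᵥ (V *ᵥ w) = w := by rw [mulVec_mulVec, hUV, one_mulVec]
  rw [mul_columnPair, columnPair_mul]
  simp only [qubitWalk, of_apply, cons_val', cons_val_zero, cons_val_one, empty_val',
    cons_val_fin_one, mulVec_sub, mulVec_smul, hUVw, one_smul]
  congr 1
  · abel
  · module

end ColumnPair

section QSP

noncomputable def qspProduct (W W' : Matrix (Fin 2) (Fin 2) ℂ) (α β : ℕ → ℝ) (d : ℕ) :
    Matrix (Fin 2) (Fin 2) ℂ :=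
  Rz (β 0) * orderedProd (fun r => W * Rz (α r) * W' * Rz (β r)) d

theorem Ry_eq (θ : ℝ) :
    Ry θ = !![(Real.cos (θ / 2) : ℂ), -Real.sin (θ / 2); Real.sin (θ / 2), Real.cos (θ / 2)] := by
  ext i j
  fin_cases i <;> fin_cases j <;> simp [Ry, pauliY, mul_comm Complex.I, mul_assoc]

theorem conjTranspose_Ry_eq (θ : ℝ) :
    (Ry θ)ᴴ
      = !![(Real.cos (θ / 2) : ℂ), Real.sin (θ / 2); -Real.sin (θ / 2), Real.cos (θ / 2)] := by
  rw [Ry_eq]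
  ext i j
  fin_cases i <;> fin_cases j <;>
    simp [-Complex.ofReal_cos, -Complex.ofReal_sin, Complex.conj_ofReal]

theorem conjTranspose_Ry_mul_diagonal (θ : ℝ) :
    (Ry θ)ᴴ * diagonal ![1, (Real.sin (θ / 2) : ℂ)]
      = diagonal ![1, -(Real.sin (θ / 2) : ℂ)] * qubitWalk (Real.cos (θ / 2) : ℂ) := by
  have hcs : (Real.cos (θ / 2) : ℂ) ^ 2 + (Real.sin (θ / 2) : ℂ) ^ 2 = 1 := by
    exact_mod_cast Real.cos_sq_add_sin_sq (θ / 2)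
  rw [conjTranspose_Ry_eq]
  generalize (Real.cos (θ / 2) : ℂ) = c at *
  generalize (Real.sin (θ / 2) : ℂ) = s at *
  have hs : 1 - c ^ 2 = s ^ 2 := by linear_combination -hcs
  ext i j
  fin_cases i <;> fin_cases j <;> simp [qubitWalk, hs] <;> ring

theorem Ry_mul_diagonal (θ : ℝ) :
    Ry θ * diagonal ![1, -(Real.sin (θ / 2) : ℂ)]
      = diagonal ![1, (Real.sin (θ / 2) : ℂ)] * qubitWalk (Real.cos (θ / 2) : ℂ) := by
  have hcs : (Real.cos (θ / 2) : ℂ) ^ 2 + (Real.sin (θ / 2) : ℂ) ^ 2 = 1 := by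
    exact_mod_cast Real.cos_sq_add_sin_sq (θ / 2)
  rw [Ry_eq]
  generalize (Real.cos (θ / 2) : ℂ) = c at *
  generalize (Real.sin (θ / 2) : ℂ) = s at *
  have hs : 1 - c ^ 2 = s ^ 2 := by linear_combination -hcs
  ext i j
  fin_cases i <;> fin_cases j <;> simp [qubitWalk, hs] <;> ring

theorem Rz_isDiag (γ : ℝ) : (Rz γ).IsDiag := by
  intro i j hij
  fin_cases i <;> fin_cases j <;> simp_all [Rz]

theorem commute_Rz_diagonal (γ : ℝ) (v : Fin 2 → ℂ) : Commute (Rz γ) (diagonal v) := by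
  rw [← (Rz_isDiag γ).diagonal_diag]
  exact commute_diagonal _ _

theorem qspFactor_mul_diagonal (θ a b : ℝ) :
    (Ry θ)ᴴ * Rz a * Ry θ * Rz b * diagonal ![1, -(Real.sin (θ / 2) : ℂ)]
      = diagonal ![1, -(Real.sin (θ / 2) : ℂ)]
        * (qubitWalk (Real.cos (θ / 2) : ℂ) * Rz a * qubitWalk (Real.cos (θ / 2) : ℂ) * Rz b) := by
  simp only [Matrix.mul_assoc]
  rw [(commute_Rz_diagonal b _).eq, ← Matrix.mul_assoc (Ry θ), Ry_mul_diagonal,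
    Matrix.mul_assoc (diagonal _), ← Matrix.mul_assoc (Rz a), (commute_Rz_diagonal a _).eq,
    Matrix.mul_assoc, ← Matrix.mul_assoc (Ry θ)ᴴ, conjTranspose_Ry_mul_diagonal]
  simp only [Matrix.mul_assoc]

theorem qspProduct_qubitWalk_apply_zero_zero (θ : ℝ) (α β : ℕ → ℝ) (d : ℕ) :
    qspProduct (qubitWalk (Real.cos (θ / 2) : ℂ)) (qubitWalk (Real.cos (θ / 2) : ℂ)) α β d 0 0
      = qspProduct (Ry θ)ᴴ (Ry θ) α β d 0 0 := by
  have h' : qspProduct (Ry θ)ᴴ (Ry θ) α β d * diagonal ![1, -(Real.sin (θ / 2) : ℂ)]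
      = diagonal ![1, -(Real.sin (θ / 2) : ℂ)]
        * qspProduct (qubitWalk (Real.cos (θ / 2) : ℂ)) (qubitWalk (Real.cos (θ / 2) : ℂ))
            α β d := by
    rw [qspProduct, qspProduct, Matrix.mul_assoc,
      orderedProd_mul_of_mul_eq (fun r => qspFactor_mul_diagonal θ (α r) (β r)) d,
      ← Matrix.mul_assoc, (commute_Rz_diagonal _ _).eq, Matrix.mul_assoc]
  simpa [mul_diagonal, diagonal_mul] using (congrFun (congrFun h' 0) 0).symm

theorem qspProduct_qubitWalk_apply_zero_zero_eq_eval {α β : ℕ → ℝ} {d : ℕ} {P : ℂ[X]}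
    (hP : ∀ θ : ℝ, qspProduct (Ry θ)ᴴ (Ry θ) α β d 0 0 = P.eval ((Real.cos (θ / 2) : ℂ)))
    {x : ℝ} (hx : x ∈ Set.Icc (-1) 1) :
    qspProduct (qubitWalk (x : ℂ)) (qubitWalk (x : ℂ)) α β d 0 0 = P.eval (x : ℂ) := by
  have hθ : Real.cos (2 * Real.arccos x / 2) = x := by
    rw [mul_div_cancel_left₀ _ two_ne_zero, Real.cos_arccos hx.1 hx.2]
  rw [← hθ, qspProduct_qubitWalk_apply_zero_zero, hP]

end QSP

theorem sum_dotProduct_smul_of_orthonormal {R ι : Type*} [CommRing R] [StarRing R] [Fintype ι]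
    [DecidableEq ι] {φ : ι → ι → R}
    (hφ : ∀ l l', star (φ l) ⬝ᵥ φ l' = if l = l' then 1 else 0) (x : ι → R) :
    ∑ l, (star (φ l) ⬝ᵥ x) • φ l = x := by
  have hΦ : of φ * (of φ)ᴴ = 1 := by
    ext l l'
    simpa [mul_apply, one_apply, dotProduct, mul_comm, eq_comm] using hφ l' l
  calc ∑ l, (star (φ l) ⬝ᵥ x) • φ l = x ᵥ* ((of φ)ᴴ * of φ) := by
        rw [← vecMul_vecMul, vecMul_eq_sum]
        congr! 2 with l
        simp [vecMul, dotProduct, mul_comm]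
    _ = x := by rw [mul_eq_one_comm.mp hΦ, vecMul_one]

theorem star_dotProduct_mulVec_eq_sum {ι : Type*} [Fintype ι] [DecidableEq ι]
    {φ : ι → ι → ℂ} (hφ : ∀ l l', star (φ l) ⬝ᵥ φ l' = if l = l' then 1 else 0)
    {B : Matrix ι ι ℂ} {z : ι → ℂ} (hB : ∀ l, B *ᵥ φ l = z l • φ l) (x : ι → ℂ) :
    star x ⬝ᵥ (B *ᵥ x) = ∑ l, (‖star (φ l) ⬝ᵥ x‖ ^ 2 : ℂ) * z l := by
  conv_lhs => arg 2; rw [← sum_dotProduct_smul_of_orthonormal hφ x]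
  simp only [mulVec_sum, mulVec_smul, hB, dotProduct_sum, dotProduct_smul, smul_eq_mul]
  refine Finset.sum_congr rfl fun l _ => ?_
  rw [star_dotProduct x (φ l), ← Complex.mul_conj']
  simp only [Complex.star_def]
  ring

section Sector

variable {R ι : Type*} [CommRing R] [Fintype ι]

def ket0 (x : ι → R) : Fin 2 × ι → R := fun p => if p.1 = 0 then x p.2 else 0

theorem submatrix_zero_mulVec (X : Matrix (Fin 2 × ι) (Fin 2 × ι) R) (y : ι → R) :
    X.submatrix (Prod.mk 0) (Prod.mk 0) *ᵥ y = fun a => (X *ᵥ ket0 y) (0, a) := by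
  ext a
  simp [mulVec, dotProduct, ket0, Fintype.sum_prod_type]

theorem mulVec_ket0_sub_smul_ket0_apply_zero {U : Matrix (Fin 2 × ι) (Fin 2 × ι) R}
    {x y : ι → R} {c : R} (h : U.submatrix (Prod.mk 0) (Prod.mk 0) *ᵥ x = c • y) (a : ι) :
    (U *ᵥ ket0 x - c • ket0 y) (0, a) = 0 := by
  have := congrFun h a
  rw [submatrix_zero_mulVec] at this
  simp [this, ket0]

theorem submatrix_mulVec_eq_smul_of_mul_columnPair {X : Matrix (Fin 2 × ι) (Fin 2 × ι) R}
    {y : ι → R} {w : Fin 2 × ι → R} {N : Matrix (Fin 2) (Fin 2) R}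
    (h : X * columnPair (ket0 y) w = columnPair (ket0 y) w * N) (hw : ∀ a, w (0, a) = 0) :
    X.submatrix (Prod.mk 0) (Prod.mk 0) *ᵥ y = N 0 0 • y := by
  rw [mul_columnPair, columnPair_mul] at h
  have h0 := congrFun (congrArg (fun M => Mᵀ 0) h)
  ext a
  simpa [submatrix_zero_mulVec, columnPair, hw, ket0] using h0 (0, a)

theorem diagonal_fst_mul_columnPair [DecidableEq ι] (e : Fin 2 → R) {u w : Fin 2 × ι → R}
    (hu : ∀ a, u (1, a) = 0) (hw : ∀ a, w (0, a) = 0) :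
    diagonal (fun p : Fin 2 × ι => e p.1) * columnPair u w = columnPair u w * diagonal e := by
  ext ⟨i, a⟩ j
  rw [diagonal_mul, mul_diagonal]
  fin_cases i <;> fin_cases j <;> simp [columnPair, hu, hw, mul_comm]

variable [StarRing R]

theorem star_ket0_dotProduct (x : ι → R) (w : Fin 2 × ι → R) :
    star (ket0 x) ⬝ᵥ w = star x ⬝ᵥ fun a => w (0, a) := by
  simp [dotProduct, ket0, Fintype.sum_prod_type]

variable {U : Matrix (Fin 2 × ι) (Fin 2 × ι) R} {A : Matrix ι ι R} {φ ψ : ι → R} {c : R}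

theorem conjTranspose_mulVec_ket0_sub_apply_zero (hA : A = U.submatrix (Prod.mk 0) (Prod.mk 0))
    (hAψ : Aᴴ *ᵥ ψ = c • φ) (a : ι) :
    (Uᴴ *ᵥ ket0 ψ - c • ket0 φ) (0, a) = 0 := by
  refine mulVec_ket0_sub_smul_ket0_apply_zero ?_ a
  rwa [← conjTranspose_submatrix, ← hA]

variable [DecidableEq ι]

theorem echo_mul_columnPair (hU : U ∈ unitaryGroup (Fin 2 × ι) R)
    (hA : A = U.submatrix (Prod.mk 0) (Prod.mk 0)) (hAφ : A *ᵥ φ = c • ψ) (hAψ : Aᴴ *ᵥ ψ = c • φ)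
    (e e' : Fin 2 → R) :
    Uᴴ * diagonal (fun p : Fin 2 × ι => e p.1) * U * diagonal (fun p : Fin 2 × ι => e' p.1)
        * columnPair (ket0 φ) (Uᴴ *ᵥ ket0 ψ - c • ket0 φ)
      = columnPair (ket0 φ) (Uᴴ *ᵥ ket0 ψ - c • ket0 φ)
        * (qubitWalk c * diagonal e * qubitWalk c * diagonal e') := by
  set F := columnPair (ket0 φ) (Uᴴ *ᵥ ket0 ψ - c • ket0 φ)
  set G := columnPair (ket0 ψ) (U *ᵥ ket0 φ - c • ket0 ψ)
  have hUF : U * F = G * qubitWalk c :=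
    mul_columnPair_sub_eq_columnPair_mul_qubitWalk (mem_unitaryGroup_iff.mp hU) c _ _
  have hUG : Uᴴ * G = F * qubitWalk c :=
    mul_columnPair_sub_eq_columnPair_mul_qubitWalk (mem_unitaryGroup_iff'.mp hU) c _ _
  have hDF (e : Fin 2 → R) : diagonal (fun p : Fin 2 × ι => e p.1) * F = F * diagonal e :=
    diagonal_fst_mul_columnPair e (by simp [ket0]) (conjTranspose_mulVec_ket0_sub_apply_zero hA hAψ)
  have hDG (e : Fin 2 → R) : diagonal (fun p : Fin 2 × ι => e p.1) * G = G * diagonal e :=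
    diagonal_fst_mul_columnPair e (by simp [ket0]) (mulVec_ket0_sub_smul_ket0_apply_zero (hA ▸ hAφ))
  simp only [Matrix.mul_assoc]
  rw [hDF, ← Matrix.mul_assoc U, hUF, Matrix.mul_assoc, ← Matrix.mul_assoc (diagonal _), hDG,
    Matrix.mul_assoc, ← Matrix.mul_assoc Uᴴ, hUG]
  simp only [Matrix.mul_assoc]

theorem submatrix_phase_mul_orderedProd_echo_mulVec (hU : U ∈ unitaryGroup (Fin 2 × ι) R)
    (hA : A = U.submatrix (Prod.mk 0) (Prod.mk 0)) (hAφ : A *ᵥ φ = c • ψ) (hAψ : Aᴴ *ᵥ ψ = c • φ)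
    (e₀ : Fin 2 → R) (e e' : ℕ → Fin 2 → R) (d : ℕ) :
    (diagonal (fun p : Fin 2 × ι => e₀ p.1) * orderedProd (fun r => Uᴴ
        * diagonal (fun p : Fin 2 × ι => e r p.1) * U * diagonal (fun p : Fin 2 × ι => e' r p.1)) d
      ).submatrix (Prod.mk 0) (Prod.mk 0) *ᵥ φ
      = (diagonal e₀ * orderedProd
          (fun r => qubitWalk c * diagonal (e r) * qubitWalk c * diagonal (e' r)) d) 0 0 • φ := by
  refine submatrix_mulVec_eq_smul_of_mul_columnPair ?_
    (conjTranspose_mulVec_ket0_sub_apply_zero hA hAψ)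
  rw [Matrix.mul_assoc, orderedProd_mul_of_mul_eq
      (fun r => echo_mul_columnPair hU hA hAφ hAψ (e r) (e' r)) d, ← Matrix.mul_assoc,
    diagonal_fst_mul_columnPair e₀ (by simp [ket0])
      (conjTranspose_mulVec_ket0_sub_apply_zero hA hAψ),
    Matrix.mul_assoc]

end Sector

theorem qsp_otoc_polynomial_transform_general
    (d : ℕ) (β : ℕ → ℝ) (α : ℕ → ℝ)
    (P : Polynomial ℂ)
    (hP : ∀ θ : ℝ,
      (Rz (β 0) *
        orderedProd (fun r => (Ry θ)ᴴ * Rz (α r) * Ry θ * Rz (β r)) d) 0 0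
        = P.eval ((Real.cos (θ / 2) : ℂ)))
    (n : ℕ)
    (Ut : Matrix (Fin 2 × Fin n) (Fin 2 × Fin n) ℂ)
    (hUt : Ut ∈ Matrix.unitaryGroup (Fin 2 × Fin n) ℂ)
    (A : Matrix (Fin n) (Fin n) ℂ)
    (hA : ∀ a b : Fin n, A a b = Ut (0, a) (0, b))
    -- `e^{−iγZ} ⊗ I` on the full space
    (RzI : ℝ → Matrix (Fin 2 × Fin n) (Fin 2 × Fin n) ℂ)
    (hRzI : ∀ (γ : ℝ) (p q : Fin 2 × Fin n),
      RzI γ p q = if p = q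
        then (if p.1 = 0 then Complex.exp (-(γ : ℂ) * Complex.I)
              else Complex.exp ((γ : ℂ) * Complex.I))
        else 0)
    -- the generalized echo operators `C_r = Ũ* (e^{−iα_r Z}⊗I) Ũ (e^{−iβ_r Z}⊗I)`
    (Cecho : ℕ → Matrix (Fin 2 × Fin n) (Fin 2 × Fin n) ℂ)
    (hCecho : ∀ r : ℕ, Cecho r = Utᴴ * RzI (α r) * Ut * RzI (β r))
    -- singular value decomposition of `A`
    (ψb φb : Fin n → (Fin n → ℂ))
    (hφb : ∀ l l' : Fin n, star (φb l) ⬝ᵥ φb l' = if l = l' then 1 else 0)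
    (lam : Fin n → ℝ)
    (hAφ : ∀ l : Fin n, A *ᵥ φb l = (lam l : ℂ) • ψb l)
    (hAψ : ∀ l : Fin n, Aᴴ *ᵥ ψb l = (lam l : ℂ) • φb l)
    (hlam : ∀ l : Fin n, lam l ∈ Set.Icc (0 : ℝ) 1)
    -- reference unit vector and overlaps
    (ψ : Fin n → ℂ)
    (v : Fin 2 × Fin n → ℂ)
    (hv : ∀ p : Fin 2 × Fin n, v p = if p.1 = 0 then ψ p.2 else 0)
    (ov : Fin n → ℂ) (hov : ∀ l : Fin n, ov l = star (φb l) ⬝ᵥ ψ) :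
    star v ⬝ᵥ ((RzI (β 0) * orderedProd Cecho d) *ᵥ v)
      = ∑ l : Fin n, (‖ov l‖ ^ 2 : ℂ) * P.eval ((lam l : ℂ)) := by
  obtain rfl : RzI = fun γ => diagonal fun p : Fin 2 × Fin n => (Rz γ).diag p.1 := by
    funext γ ⟨i, a⟩ q
    rw [hRzI, diagonal_apply]
    fin_cases i <;> simp [Rz]
  obtain rfl : Cecho = _ := funext hCecho
  obtain rfl : v = ket0 ψ := funext hv
  have hA' : A = Ut.submatrix (Prod.mk 0) (Prod.mk 0) := Matrix.ext hA
  rw [star_ket0_dotProduct, ← submatrix_zero_mulVec,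
    star_dotProduct_mulVec_eq_sum hφb (z := fun l => P.eval (lam l : ℂ)) fun l => ?_]
  · simp only [hov]
  rw [submatrix_phase_mul_orderedProd_echo_mulVec hUt hA' (hAφ l) (hAψ l)]
  simp only [(Rz_isDiag _).diagonal_diag]
  exact congrArg (· • φb l)
    (qspProduct_qubitWalk_apply_zero_zero_eq_eval hP
      (Set.Icc_subset_Icc_left (by norm_num) (hlam l)))

/-- **The depth-`d` QSP-OTOC applies the QSP polynomial `P` to each singular
value of the truncated propagator `A`:**
`⟨(|0⟩⊗ψ), (e^{−iβ_0 Z}⊗I) C_d ⋯ C_1 (|0⟩⊗ψ)⟩ = Σ_l |α_l|² P(λ_l)`. -/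
theorem qsp_otoc_polynomial_transform
    (d : ℕ) (hd : 1 ≤ d) (β : ℕ → ℝ) (α : ℕ → ℝ)
    (P : Polynomial ℂ) (hPdeg : P.natDegree ≤ 2 * d)
    (hP : ∀ θ : ℝ,
      (Rz (β 0) *
        orderedProd (fun r => (Ry θ)ᴴ * Rz (α r) * Ry θ * Rz (β r)) d) 0 0
        = P.eval ((Real.cos (θ / 2) : ℂ)))
    (n : ℕ) (hn : 1 ≤ n)
    (Ut : Matrix (Fin 2 × Fin n) (Fin 2 × Fin n) ℂ)
    (hUt : Ut ∈ Matrix.unitaryGroup (Fin 2 × Fin n) ℂ)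
    (A : Matrix (Fin n) (Fin n) ℂ)
    (hA : ∀ a b : Fin n, A a b = Ut (0, a) (0, b))
    -- `e^{−iγZ} ⊗ I` on the full space
    (RzI : ℝ → Matrix (Fin 2 × Fin n) (Fin 2 × Fin n) ℂ)
    (hRzI : ∀ (γ : ℝ) (p q : Fin 2 × Fin n),
      RzI γ p q = if p = q
        then (if p.1 = 0 then Complex.exp (-(γ : ℂ) * Complex.I)
              else Complex.exp ((γ : ℂ) * Complex.I))
        else 0)
    -- the generalized echo operators `C_r = Ũ* (e^{−iα_r Z}⊗I) Ũ (e^{−iβ_r Z}⊗I)`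
    (Cecho : ℕ → Matrix (Fin 2 × Fin n) (Fin 2 × Fin n) ℂ)
    (hCecho : ∀ r : ℕ, Cecho r = Utᴴ * RzI (α r) * Ut * RzI (β r))
    -- singular value decomposition of `A`
    (ψb φb : Fin n → (Fin n → ℂ))
    (hψb : ∀ l l' : Fin n, star (ψb l) ⬝ᵥ ψb l' = if l = l' then 1 else 0)
    (hφb : ∀ l l' : Fin n, star (φb l) ⬝ᵥ φb l' = if l = l' then 1 else 0)
    (lam : Fin n → ℝ)
    (hAφ : ∀ l : Fin n, A *ᵥ φb l = (lam l : ℂ) • ψb l)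
    (hAψ : ∀ l : Fin n, Aᴴ *ᵥ ψb l = (lam l : ℂ) • φb l)
    (hlam : ∀ l : Fin n, lam l ∈ Set.Icc (0 : ℝ) 1)
    -- reference unit vector and overlaps
    (ψ : Fin n → ℂ) (hψ : star ψ ⬝ᵥ ψ = 1)
    (v : Fin 2 × Fin n → ℂ)
    (hv : ∀ p : Fin 2 × Fin n, v p = if p.1 = 0 then ψ p.2 else 0)
    (ov : Fin n → ℂ) (hov : ∀ l : Fin n, ov l = star (φb l) ⬝ᵥ ψ) :
    star v ⬝ᵥ ((RzI (β 0) * orderedProd Cecho d) *ᵥ v)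
      = ∑ l : Fin n, (‖ov l‖ ^ 2 : ℂ) * P.eval ((lam l : ℂ)) :=
  qsp_otoc_polynomial_transform_general d β α P hP n Ut hUt A hA RzI hRzI Cecho hCecho ψb φb hφb lam
    hAφ hAψ hlam ψ v hv ov hov
end
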